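/- arXiv:2405.15112 — 2 statements merged into one kernel-verified Lean document; each statement's English description precedes it below -/
import Mathlib

section
/- Let v₁,…,v_n ∈ ℂ^k with Δ_{I(a,i)} ≠ 0 for all 1 ≤ i ≤ k−1, and let u₁,…,u_{k−2} be the splicing vectors u_j ∈ v_{a+j} + span(v_a,…,v_{a+j−1}), u_j ∈ span(v_{n−k+j+1},…,v_n). Then for each 1 ≤ i ≤ k−2, u_i ∧ u_{i+1} ∧ ⋯ ∧ u_{k−2} ∧ v_n = (Δ_{I(a,k−1)}/Δ_{I(a,i)}) · v_{n−k+i+1} ∧ ⋯ ∧ v_{n−1} ∧ v_n in Λ^{k−i} ℂ^k. -/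
/-- The minor of the matrix with columns `v` on the ordered tuple of column indices `J`. -/
noncomputable def Delta (k : ℕ) (v : ℕ → Fin k → ℂ) (J : Fin k → ℕ) : ℂ :=
  Matrix.det (Matrix.of fun r c : Fin k => v (J c) r)

/-- The ordered index tuple `I(a,i) = (a, …, a+i-1, n-k+i+1, …, n)`. -/
def Iset (k n a i : ℕ) : Fin k → ℕ :=
  fun j => if (j : ℕ) < i then a + (j : ℕ) else n - k + 1 + (j : ℕ)

/-- The tuple `I'(a,s,i)`: `I(a,i)` with the entry `a+s` (at position `s`) replaced by `a+i`. -/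
def Iprime (k n a i s : ℕ) : Fin k → ℕ :=
  fun j => if (j : ℕ) = s then a + i else Iset k n a i j

/-- The tuple `I''(a,t,i)`: `I(a,i)` with the entry `n-t` (at position `k-1-t`) replaced by `a+i`. -/
def Idprime (k n a i t : ℕ) : Fin k → ℕ :=
  fun j => if (j : ℕ) = k - 1 - t then a + i else Iset k n a i j

private lemma iota_mul_ιMulti {k : ℕ} (N : ℕ) (x : Fin k → ℂ) (g : Fin N → Fin k → ℂ) :
    ExteriorAlgebra.ι ℂ x * ExteriorAlgebra.ιMulti ℂ N g =
      ExteriorAlgebra.ιMulti ℂ (N + 1) (Fin.cons x g) := by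
  have h : Matrix.vecTail (Fin.cons x g) = g := by
    funext i; simp [Matrix.vecTail]
  rw [ExteriorAlgebra.ιMulti_succ_apply, Fin.cons_zero, h]

private lemma Delta_eq {k : ℕ} (v : ℕ → Fin k → ℂ) (J : Fin k → ℕ) :
    Delta k v J = Matrix.detRowAlternating (fun c : Fin k => v (J c)) := by
  rw [Delta, ← Matrix.det_transpose]
  rfl

private lemma span_icc_coeff {k : ℕ} (v : ℕ → Fin k → ℂ) (m M L : ℕ) (h : m ≤ M)
    (hL : L = M - m + 1)
    (x : Fin k → ℂ) (hx : x ∈ Submodule.span ℂ (v '' Set.Icc m M)) :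
    ∃ c : Fin L → ℂ, (∑ t : Fin L, c t • v (m + (t : ℕ))) = x := by
  subst hL
  have himg : v '' Set.Icc m M = Set.range (fun t : Fin (M - m + 1) => v (m + (t : ℕ))) := by
    ext y
    simp only [Set.mem_image, Set.mem_range, Set.mem_Icc]
    constructor
    · rintro ⟨z, ⟨hz1, hz2⟩, rfl⟩
      refine ⟨⟨z - m, by omega⟩, ?_⟩
      have hz : m + (z - m) = z := by omega
      show v (m + (z - m)) = v z
      rw [hz]
    · rintro ⟨t, rfl⟩
      exact ⟨m + (t : ℕ), ⟨by omega, by have := t.2; omega⟩, rfl⟩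
  rw [himg] at hx
  exact (Submodule.mem_span_range_iff_exists_fun ℂ).mp hx

private lemma coeff_lemma {k n a : ℕ} (hkn : k ≤ n)
    (v u : ℕ → Fin k → ℂ)
    (j : ℕ) (h1 : 1 ≤ j) (h2 : j ≤ k - 2)
    (hu1j : v (a + j) - u j ∈ Submodule.span ℂ (v '' Set.Icc a (a + j - 1)))
    (hu2j : u j ∈ Submodule.span ℂ (v '' Set.Icc (n - k + j + 1) n)) :
    ∃ c : Fin (k - j) → ℂ, (∑ t : Fin (k - j), c t • v (n - k + j + 1 + (t : ℕ))) = u j ∧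
      c ⟨0, by omega⟩ * Delta k v (Iset k n a j) = Delta k v (Iset k n a (j + 1)) := by
  have hk : 3 ≤ k := by omega
  obtain ⟨c, hc⟩ := span_icc_coeff v (n - k + j + 1) n (k - j) (by omega) (by omega) (u j) hu2j
  refine ⟨c, hc, ?_⟩
  set D : (Fin k → ℂ) [⋀^Fin k]→ₗ[ℂ] ℂ := Matrix.detRowAlternating with hD
  have hjk : j < k := by omega
  set jF : Fin k := ⟨j, hjk⟩ with hjF
  set base : Fin k → (Fin k → ℂ) := fun s => v (Iset k n a j s) with hbase
  -- Way 1 : D (update base jF (u j)) = Delta_{I(a,j+1)}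
  have hspan : ∀ w ∈ Submodule.span ℂ (v '' Set.Icc a (a + j - 1)),
      D (Function.update base jF w) = 0 := by
    intro w hw
    induction hw using Submodule.span_induction with
    | mem x hx =>
      obtain ⟨y, hy, rfl⟩ := hx
      rw [Set.mem_Icc] at hy
      have hsk : y - a < k := by omega
      have hne : (⟨y - a, hsk⟩ : Fin k) ≠ jF := by
        intro hcon
        have := Fin.mk.injEq (y - a) hsk j hjk ▸ congrArg Fin.val hcon
        simp at this; omega
      have heq : Function.update base jF (v y) ⟨y - a, hsk⟩ =
          Function.update base jF (v y) jF := by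
        rw [Function.update_self, Function.update_of_ne hne]
        show v (Iset k n a j ⟨y - a, hsk⟩) = v y
        unfold Iset
        have hav : a + (y - a) = y := by omega
        rw [if_pos (show ((⟨y - a, hsk⟩ : Fin k) : ℕ) < j by show y - a < j; omega)]
        show v (a + (y - a)) = v y
        rw [hav]
      exact D.map_eq_zero_of_eq _ heq hne
    | zero =>
      have : Function.update base jF (0 : Fin k → ℂ) = Function.update base jF ((0:ℂ) • 0) := by
        rw [zero_smul]
      rw [this, D.map_update_smul, zero_smul]
    | add x y hx hy px py => rw [D.map_update_add, px, py, add_zero]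
    | smul r x hx px => rw [D.map_update_smul, px, smul_zero]
  have hway1 : D (Function.update base jF (u j)) = Delta k v (Iset k n a (j + 1)) := by
    have hu : u j = v (a + j) - (v (a + j) - u j) := by ring
    rw [hu, D.map_update_sub, hspan _ hu1j, sub_zero]
    have hupd : Function.update base jF (v (a + j)) = fun s => v (Iset k n a (j + 1) s) := by
      funext s
      rcases eq_or_ne s jF with rfl | hs
      · rw [Function.update_self]
        show v (a + j) = v (Iset k n a (j + 1) jF)
        unfold Iset
        rw [if_pos (show (jF : ℕ) < j + 1 by show j < j + 1; omega)]
      · rw [Function.update_of_ne hs]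
        have hvs : (s : ℕ) ≠ j := fun h => hs (Fin.ext h)
        show v (Iset k n a j s) = v (Iset k n a (j + 1) s)
        unfold Iset
        rcases lt_or_gt_of_ne hvs with h | h
        · rw [if_pos h, if_pos (by omega)]
        · rw [if_neg (by omega), if_neg (by omega)]
    rw [hupd, Delta_eq]
  -- Way 2 : D (update base jF (u j)) = c 0 * Delta_{I(a,j)}
  have hbase0 : base jF = v (n - k + j + 1 + ((⟨0, by omega⟩ : Fin (k - j)) : ℕ)) := by
    show v (Iset k n a j jF) = v (n - k + j + 1 + 0)
    unfold Iset
    rw [if_neg (show ¬ ((jF : ℕ) < j) by show ¬ (j < j); omega)]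
    show v (n - k + 1 + j) = v (n - k + j + 1 + 0)
    have : n - k + 1 + j = n - k + j + 1 + 0 := by omega
    rw [this]
  have hway2 : D (Function.update base jF (u j)) =
      c ⟨0, by omega⟩ * Delta k v (Iset k n a j) := by
    rw [← hc, D.map_update_sum]
    rw [Finset.sum_eq_single_of_mem (⟨0, by omega⟩ : Fin (k - j)) (Finset.mem_univ _)]
    · rw [D.map_update_smul, ← hbase0, Function.update_eq_self, smul_eq_mul, Delta_eq]
    · intro t _ ht
      rw [D.map_update_smul]
      have ht0 : 1 ≤ (t : ℕ) := by
        rcases Nat.eq_zero_or_pos (t : ℕ) with h | h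
        · exact absurd (Fin.ext h) ht
        · exact h
      have hjt : j + (t : ℕ) < k := by have := t.2; omega
      have hne : (⟨j + (t : ℕ), hjt⟩ : Fin k) ≠ jF := by
        intro hcon
        have := congrArg Fin.val hcon
        change j + (t : ℕ) = j at this; omega
      have heq : Function.update base jF (v (n - k + j + 1 + (t : ℕ))) ⟨j + (t : ℕ), hjt⟩ =
          Function.update base jF (v (n - k + j + 1 + (t : ℕ))) jF := by
        rw [Function.update_self, Function.update_of_ne hne]
        show v (Iset k n a j ⟨j + (t : ℕ), hjt⟩) = v (n - k + j + 1 + (t : ℕ))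
        unfold Iset
        rw [if_neg (show ¬ ((⟨j + (t:ℕ), hjt⟩ : Fin k) : ℕ) < j by show ¬ (j + (t:ℕ) < j); omega)]
        show v (n - k + 1 + (j + (t : ℕ))) = v (n - k + j + 1 + (t : ℕ))
        have : n - k + 1 + (j + (t : ℕ)) = n - k + j + 1 + (t : ℕ) := by omega
        rw [this]
      rw [D.map_eq_zero_of_eq _ heq hne, smul_zero]
  rw [← hway2, hway1]

private lemma main_ind {k n a : ℕ}
    (hkn : k ≤ n)
    (v : ℕ → Fin k → ℂ)
    (hΔ : ∀ i, 1 ≤ i → i ≤ k - 1 → Delta k v (Iset k n a i) ≠ 0)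
    (u : ℕ → Fin k → ℂ)
    (hu1 : ∀ j, 1 ≤ j → j ≤ k - 2 →
      v (a + j) - u j ∈ Submodule.span ℂ (v '' Set.Icc a (a + j - 1)))
    (hu2 : ∀ j, 1 ≤ j → j ≤ k - 2 →
      u j ∈ Submodule.span ℂ (v '' Set.Icc (n - k + j + 1) n)) :
    ∀ m N : ℕ, N = m + 1 → m ≤ k - 2 → 1 ≤ k - 1 - m →
      ExteriorAlgebra.ιMulti ℂ N
          (fun jj : Fin N => if (jj : ℕ) < m then u (k - 1 - m + (jj : ℕ)) else v n) =
        (Delta k v (Iset k n a (k - 1)) / Delta k v (Iset k n a (k - 1 - m))) •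
          ExteriorAlgebra.ιMulti ℂ N (fun jj : Fin N => v (n - m + (jj : ℕ))) := by
  intro m
  induction m with
  | zero =>
    intro N hN _ hk1
    subst hN
    simp only [Nat.sub_zero]
    have hfam : (fun jj : Fin 1 => if (jj : ℕ) < 0 then u (k - 1 + (jj : ℕ)) else v n) =
        (fun jj : Fin 1 => v (n + (jj : ℕ))) := by
      funext jj
      have h0 : (jj : ℕ) = 0 := by have := jj.2; omega
      rw [if_neg (by omega), h0]
      rfl
    rw [hfam, div_self (hΔ (k - 1) (by omega) le_rfl), one_smul]
  | succ m ih =>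
    intro N hN hm2 hk1
    subst hN
    have hk : 3 ≤ k := by omega
    -- rewrite LHS family as a cons
    have hcons : (fun jj : Fin (m + 1 + 1) =>
        if (jj : ℕ) < m + 1 then u (k - 1 - (m + 1) + (jj : ℕ)) else v n) =
        Fin.cons (u (k - 2 - m))
          (fun jj : Fin (m + 1) => if (jj : ℕ) < m then u (k - 1 - m + (jj : ℕ)) else v n) := by
      funext jj
      refine Fin.cases ?_ ?_ jj
      · rw [Fin.cons_zero]
        show (if (0 : ℕ) < m + 1 then u (k - 1 - (m + 1) + 0) else v n) = u (k - 2 - m)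
        rw [if_pos (by omega)]
        have : k - 1 - (m + 1) + 0 = k - 2 - m := by omega
        rw [this]
      · intro p
        rw [Fin.cons_succ]
        show (if ((p : ℕ) + 1) < m + 1 then u (k - 1 - (m + 1) + ((p : ℕ) + 1)) else v n) =
          if (p : ℕ) < m then u (k - 1 - m + (p : ℕ)) else v n
        by_cases h : (p : ℕ) < m
        · rw [if_pos (by omega), if_pos h]
          have : k - 1 - (m + 1) + ((p : ℕ) + 1) = k - 1 - m + (p : ℕ) := by omega
          rw [this]
        · rw [if_neg (by omega), if_neg h]
    rw [hcons, ← iota_mul_ιMulti, ih (m + 1) rfl (by omega) (by omega), mul_smul_comm]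
    -- now compute ι (u (k-2-m)) * ιMulti (fun jj => v (n - m + jj))
    obtain ⟨c, hcsum, hc0⟩ := coeff_lemma (a := a) hkn v u (k - 2 - m) (by omega) (by omega)
      (hu1 _ (by omega) (by omega)) (hu2 _ (by omega) (by omega))
    have hbig : ExteriorAlgebra.ι ℂ (u (k - 2 - m)) *
        ExteriorAlgebra.ιMulti ℂ (m + 1) (fun jj : Fin (m + 1) => v (n - m + (jj : ℕ))) =
        c ⟨0, by omega⟩ •
          ExteriorAlgebra.ιMulti ℂ (m + 1 + 1)
            (fun jj : Fin (m + 1 + 1) => v (n - (m + 1) + (jj : ℕ))) := by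
      have hfam0 : (Fin.cons (v (n - k + (k - 2 - m) + 1 +
            ((⟨0, by omega⟩ : Fin (k - (k - 2 - m))) : ℕ)))
            (fun jj : Fin (m + 1) => v (n - m + (jj : ℕ))) : Fin (m + 1 + 1) → Fin k → ℂ) =
          (fun jj : Fin (m + 1 + 1) => v (n - (m + 1) + (jj : ℕ))) := by
        funext jj
        refine Fin.cases ?_ ?_ jj
        · rw [Fin.cons_zero]
          show v (n - k + (k - 2 - m) + 1 + 0) = v (n - (m + 1) + 0)
          have : n - k + (k - 2 - m) + 1 + 0 = n - (m + 1) + 0 := by omega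
          rw [this]
        · intro p
          rw [Fin.cons_succ]
          show v (n - m + (p : ℕ)) = v (n - (m + 1) + ((p : ℕ) + 1))
          have : n - m + (p : ℕ) = n - (m + 1) + ((p : ℕ) + 1) := by omega
          rw [this]
      rw [← hcsum, map_sum, Finset.sum_mul]
      rw [Finset.sum_eq_single_of_mem (⟨0, by omega⟩ : Fin (k - (k - 2 - m))) (Finset.mem_univ _)]
      · rw [map_smul, smul_mul_assoc, iota_mul_ιMulti, hfam0]
      · intro t _ ht
        have ht0 : 1 ≤ (t : ℕ) := by
          rcases Nat.eq_zero_or_pos (t : ℕ) with h | h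
          · exact absurd (Fin.ext h) ht
          · exact h
        have htk : (t : ℕ) < k - (k - 2 - m) := t.2
        have htm : (t : ℕ) - 1 < m + 1 := by omega
        rw [map_smul, smul_mul_assoc, iota_mul_ιMulti]
        set F : Fin (m + 1 + 1) → Fin k → ℂ :=
          Fin.cons (v (n - k + (k - 2 - m) + 1 + (t : ℕ)))
            (fun jj : Fin (m + 1) => v (n - m + (jj : ℕ))) with hF
        have heq : F ((⟨(t : ℕ) - 1, htm⟩ : Fin (m + 1)).succ) = F 0 := by
          rw [hF]
          rw [Fin.cons_succ, Fin.cons_zero]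
          show v (n - m + ((t : ℕ) - 1)) = v (n - k + (k - 2 - m) + 1 + (t : ℕ))
          have : n - m + ((t : ℕ) - 1) = n - k + (k - 2 - m) + 1 + (t : ℕ) := by omega
          rw [this]
        rw [AlternatingMap.map_eq_zero_of_eq _ _ heq (Fin.succ_ne_zero _), smul_zero]
    rw [hbig, smul_smul]
    congr 1
    -- scalar identity
    have e2 : k - 2 - m + 1 = k - 1 - m := by omega
    rw [e2] at hc0
    have e3 : Delta k v (Iset k n a (k - 1 - (m + 1))) = Delta k v (Iset k n a (k - 2 - m)) := by
      have e1 : k - 1 - (m + 1) = k - 2 - m := by omega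
      rw [e1]
    rw [e3]
    have hB : Delta k v (Iset k n a (k - 2 - m)) ≠ 0 := hΔ _ (by omega) (by omega)
    have hA : Delta k v (Iset k n a (k - 1 - m)) ≠ 0 := hΔ _ (by omega) (by omega)
    field_simp
    linear_combination Delta k v (Iset k n a (k - 1)) * hc0

/-- Wedge identity: `u_i ∧ ⋯ ∧ u_{k-2} ∧ v_n = (Δ_{I(a,k-1)}/Δ_{I(a,i)}) · v_{n-k+i+1} ∧ ⋯ ∧ v_n`. -/
theorem wedge_right_identity (k n a : ℕ)
    (hkn : k ≤ n) (h2a : 2 ≤ a) (han : a ≤ n - k)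
    (v : ℕ → Fin k → ℂ)
    (hΔ : ∀ i, 1 ≤ i → i ≤ k - 1 → Delta k v (Iset k n a i) ≠ 0)
    (u : ℕ → Fin k → ℂ)
    (hu1 : ∀ j, 1 ≤ j → j ≤ k - 2 →
      v (a + j) - u j ∈ Submodule.span ℂ (v '' Set.Icc a (a + j - 1)))
    (hu2 : ∀ j, 1 ≤ j → j ≤ k - 2 →
      u j ∈ Submodule.span ℂ (v '' Set.Icc (n - k + j + 1) n)) :
    ∀ i, 1 ≤ i → i ≤ k - 2 →
      ExteriorAlgebra.ιMulti ℂ (k - i)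
          (fun j : Fin (k - i) => if (j : ℕ) < k - 1 - i then u (i + (j : ℕ)) else v n) =
        (Delta k v (Iset k n a (k - 1)) / Delta k v (Iset k n a i)) •
          ExteriorAlgebra.ιMulti ℂ (k - i)
            (fun j : Fin (k - i) => v (n - k + i + 1 + (j : ℕ))) := by
  intro i h1 h2
  have hmain := main_ind hkn v hΔ u hu1 hu2 (k - 1 - i) (k - i) (by omega) (by omega) (by omega)
  have e1 : k - 1 - (k - 1 - i) = i := by omega
  have e2 : n - (k - 1 - i) = n - k + i + 1 := by omega
  rw [e1, e2] at hmain
  exact hmain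
end

section
/- With V ∈ U_a ⊂ Π°_{k,n} and u₁,…,u_{k−2} the splicing vectors, the matrix V₂ = (v₁, …, v_a, u₁, …, u_{k−2}, v_n) with a+k−1 columns lies in the open positroid variety Π°_{k,a+k−1}: all of its cyclically consecutive k×k minors are nonzero. Specifically: (1) for b+k−1 ≤ a, Δ_{b,…,b+k−1}(V₂) = Δ_{b,…,b+k−1}(V); (2) for b < a < b+k−1 with i = b+k−1−a, Δ_{b,…,b+k−1}(V₂) = Δ_{b,…,b+k−1}(V); (3) Δ_{a,…,a+k−1}(V₂) = Δ_{I(a,k−1)}(V); (4) the cyclic minor starting at column a+i of V₂ (wrapping around) equals (Δ_{I(a,k−1)}(V)/Δ_{I(a,i)}(V)) · Δ_{n−k+i+1,…,n,1,…,i}(V), and all of these are nonzero. -/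
/-- Cyclic reduction of a 1-based column index modulo `n`. -/
def cyc (n b : ℕ) : ℕ := (b - 1) % n + 1

/-- Membership in the open positroid variety: all cyclically consecutive `k × k` minors of the
matrix with `1`-indexed columns `v 1, …, v n` are nonzero. -/
def PiCirc (k n : ℕ) (v : ℕ → Fin k → ℂ) : Prop :=
  ∀ b, 1 ≤ b → b ≤ n → Delta k v (fun j => cyc n (b + (j : ℕ))) ≠ 0

lemma cyc_eq_self {n b : ℕ} (h1 : 1 ≤ b) (h2 : b ≤ n) : cyc n b = b := by
  unfold cyc; rw [Nat.mod_eq_of_lt (by omega)]; omega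

lemma cyc_eq_sub {n b : ℕ} (h1 : n < b) (h2 : b ≤ n + n) : cyc n b = b - n := by
  unfold cyc
  have : b - 1 = (b - 1 - n) + 1 * n := by omega
  rw [this, Nat.add_mul_mod_self_right, Nat.mod_eq_of_lt (by omega)]; omega

lemma Delta_congr {k : ℕ} (v : ℕ → Fin k → ℂ) {J₁ J₂ : Fin k → ℕ}
    (h : ∀ j, J₁ j = J₂ j) : Delta k v J₁ = Delta k v J₂ := by
  have : J₁ = J₂ := funext h
  rw [this]

lemma sum_shift (k off m : ℕ) (h : off + m ≤ k) (f : ℕ → ℂ) :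
    (∑ t ∈ Finset.range k, if off ≤ t ∧ t < off + m then f (t - off) else 0) =
    ∑ s ∈ Finset.range m, f s := by
  rw [Finset.sum_ite, Finset.sum_const_zero, add_zero]
  have hfil : (Finset.range k).filter (fun t => off ≤ t ∧ t < off + m) =
      Finset.Ico off (off + m) := by
    ext t; simp only [Finset.mem_filter, Finset.mem_range, Finset.mem_Ico]; omega
  rw [hfil, Finset.sum_Ico_eq_sum_range, Nat.add_sub_cancel_left]
  apply Finset.sum_congr rfl
  intro s _; congr 1; omega

lemma prod_telescope (F : ℕ → ℂ) (i L : ℕ) (h : ∀ m, i ≤ m → m ≤ i + L → F m ≠ 0) :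
    (∏ t ∈ Finset.range L, F (i + t + 1) / F (i + t)) = F (i + L) / F i := by
  induction L with
  | zero => simp [div_self (h i le_rfl (by omega))]
  | succ L ih =>
    have h1 : F (i + L) ≠ 0 := h _ (by omega) (by omega)
    have h2 : F i ≠ 0 := h _ le_rfl (by omega)
    rw [Finset.prod_range_succ, ih (fun m h1 h2 => h m h1 (by omega)),
      show i + (L + 1) = i + L + 1 from rfl]
    field_simp

lemma Iprime_self (k n a m : ℕ) : Iprime k n a m m = Iset k n a (m + 1) := by
  funext j
  unfold Iprime Iset
  rcases Nat.lt_trichotomy (j : ℕ) m with h | h | h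
  · rw [if_neg (by omega), if_pos h, if_pos (by omega)]
  · rw [if_pos h, if_pos (by omega)]
    omega
  · rw [if_neg (by omega), if_neg (by omega), if_neg (by omega)]


lemma u_expand (k n a : ℕ)
    (v : ℕ → Fin k → ℂ)
    (u : ℕ → Fin k → ℂ)
    (hu : ∀ i, 1 ≤ i → i ≤ k - 2 → u i = v (a + i) -
      ∑ s ∈ Finset.range i,
        (Delta k v (Iprime k n a i s) / Delta k v (Iset k n a i)) • v (a + s))
    (i : ℕ) (hi1 : 1 ≤ i) (hi2 : i ≤ k - 2)
    (hne : Delta k v (Iset k n a i) ≠ 0) (r : Fin k) :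
    u i r = ∑ j : Fin k, (if i ≤ (j : ℕ) then
      Delta k v (Iprime k n a i (j : ℕ)) / Delta k v (Iset k n a i) *
        v (n - k + 1 + (j : ℕ)) r else 0) := by
  classical
  have hk : 2 ≤ k := by omega
  set A : Matrix (Fin k) (Fin k) ℂ := Matrix.of (fun r c : Fin k => v (Iset k n a i c) r) with hA
  have hdet : A.det = Delta k v (Iset k n a i) := rfl
  have hcr : ∀ c : Fin k, Matrix.cramer A (fun r => v (a + i) r) c =
      Delta k v (Iprime k n a i (c : ℕ)) := by
    intro c
    rw [Matrix.cramer_apply]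
    unfold Delta
    congr 1
    ext r d
    rw [Matrix.updateCol_apply]
    by_cases hd : d = c
    · simp [hd, Iprime]
    · have : (d : ℕ) ≠ (c : ℕ) := fun h => hd (Fin.ext h)
      simp [hd, Iprime, this, hA]
  have hmv := Matrix.mulVec_cramer A (fun r => v (a + i) r)
  have hvai : ∀ r : Fin k, v (a + i) r =
      ∑ c : Fin k, Delta k v (Iprime k n a i (c : ℕ)) / Delta k v (Iset k n a i) *
        v (Iset k n a i c) r := by
    intro r
    have h0 := congrFun hmv r
    simp only [Matrix.mulVec, dotProduct, Pi.smul_apply, smul_eq_mul] at h0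
    have h2 : Delta k v (Iset k n a i) * v (a + i) r =
        ∑ c : Fin k, v (Iset k n a i c) r * Delta k v (Iprime k n a i (c : ℕ)) := by
      rw [← hdet, ← h0]
      apply Finset.sum_congr rfl
      intro c _
      rw [hcr c]
      rfl
    calc v (a + i) r = (Delta k v (Iset k n a i) * v (a + i) r) / Delta k v (Iset k n a i) := by
          rw [mul_div_cancel_left₀ _ hne]
      _ = (∑ c : Fin k, v (Iset k n a i c) r * Delta k v (Iprime k n a i (c : ℕ))) /
            Delta k v (Iset k n a i) := by rw [h2]
      _ = _ := by
          rw [Finset.sum_div]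
          apply Finset.sum_congr rfl
          intro c _
          ring
  have hur : u i r = v (a + i) r - ∑ s ∈ Finset.range i,
      Delta k v (Iprime k n a i s) / Delta k v (Iset k n a i) * v (a + s) r := by
    rw [hu i hi1 hi2]
    simp [Finset.sum_apply]
  rw [hur, hvai r]
  have hsplit : ∀ c : Fin k,
      Delta k v (Iprime k n a i (c : ℕ)) / Delta k v (Iset k n a i) * v (Iset k n a i c) r =
      (if (c : ℕ) < i then
        Delta k v (Iprime k n a i (c : ℕ)) / Delta k v (Iset k n a i) * v (a + (c : ℕ)) r else 0) +
      (if i ≤ (c : ℕ) then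
        Delta k v (Iprime k n a i (c : ℕ)) / Delta k v (Iset k n a i) *
          v (n - k + 1 + (c : ℕ)) r else 0) := by
    intro c
    by_cases hc : (c : ℕ) < i
    · simp [hc, Iset, show ¬ i ≤ (c : ℕ) by omega]
    · simp [hc, Iset, show i ≤ (c : ℕ) by omega]
  rw [Finset.sum_congr rfl (fun c _ => hsplit c), Finset.sum_add_distrib]
  have hfirst : (∑ c : Fin k, if (c : ℕ) < i then
      Delta k v (Iprime k n a i (c : ℕ)) / Delta k v (Iset k n a i) * v (a + (c : ℕ)) r else 0) =
      ∑ s ∈ Finset.range i,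
        Delta k v (Iprime k n a i s) / Delta k v (Iset k n a i) * v (a + s) r := by
    rw [Fin.sum_univ_eq_sum_range (fun t => if t < i then
      Delta k v (Iprime k n a i t) / Delta k v (Iset k n a i) * v (a + t) r else 0) k]
    rw [← sum_shift k 0 i (by omega)
      (fun s => Delta k v (Iprime k n a i s) / Delta k v (Iset k n a i) * v (a + s) r)]
    apply Finset.sum_congr rfl
    intro t _
    by_cases ht : t < i
    · simp [ht, show 0 ≤ t ∧ t < 0 + i by omega]
    · simp [ht, show ¬ (0 ≤ t ∧ t < 0 + i) by omega]
  rw [hfirst, add_sub_cancel_left]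

section Main
variable (k n a : ℕ) (v u v2 : ℕ → Fin k → ℂ)

lemma hu_apply'
    (hu : ∀ i, 1 ≤ i → i ≤ k - 2 → u i = v (a + i) -
      ∑ s ∈ Finset.range i,
        (Delta k v (Iprime k n a i s) / Delta k v (Iset k n a i)) • v (a + s))
    (m : ℕ) (hm1 : 1 ≤ m) (hm2 : m ≤ k - 2) (r : Fin k) :
    u m r = v (a + m) r - ∑ s ∈ Finset.range m,
      Delta k v (Iprime k n a m s) / Delta k v (Iset k n a m) * v (a + s) r := by
  rw [hu m hm1 hm2]
  simp [Finset.sum_apply]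


lemma det_low (hk : 2 ≤ k) (h2a : 2 ≤ a)
    (hu : ∀ i, 1 ≤ i → i ≤ k - 2 → u i = v (a + i) -
      ∑ s ∈ Finset.range i,
        (Delta k v (Iprime k n a i s) / Delta k v (Iset k n a i)) • v (a + s))
    (hv2 : ∀ m, 1 ≤ m → m ≤ a + k - 1 →
      v2 m = if m ≤ a then v m else if m ≤ a + k - 2 then u (m - a) else v n)
    (b : ℕ) (hb1 : 1 ≤ b) (hba : b < a) :
    Delta k v2 (fun j => b + (j : ℕ)) = Delta k v (fun j => b + (j : ℕ)) := by
  classical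
  set X : ℕ → ℕ → ℂ := fun m s => Delta k v (Iprime k n a m s) / Delta k v (Iset k n a m)
    with hX
  set T : Matrix (Fin k) (Fin k) ℂ := Matrix.of (fun d c : Fin k =>
    (if d = c then (1 : ℂ) else 0) +
    (if a ≤ b + (d : ℕ) ∧ (d : ℕ) < (c : ℕ) ∧ a < b + (c : ℕ)
      then - X (b + (c : ℕ) - a) (b + (d : ℕ) - a) else 0)) with hT
  have hTtri : T.BlockTriangular id := by
    intro d c h
    simp only [id] at h
    have h' : (c : ℕ) < (d : ℕ) := h
    have h1 : ¬ d = c := by intro hh; subst hh; exact absurd h (lt_irrefl _)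
    rw [hT]
    simp only [Matrix.of_apply]
    rw [if_neg h1, if_neg (by omega), zero_add]
  have hdetT : T.det = 1 := by
    rw [Matrix.det_of_upperTriangular hTtri]
    apply Finset.prod_eq_one
    intro c _
    simp [hT]
  have hM : (Matrix.of fun r c : Fin k => v2 (b + (c : ℕ)) r) =
      (Matrix.of fun r d : Fin k => v (b + (d : ℕ)) r) * T := by
    ext r c
    rw [Matrix.mul_apply]
    have hsum : ∀ d : Fin k, (Matrix.of fun r d : Fin k => v (b + (d : ℕ)) r) r d * T d c =
        (if d = c then v (b + (c : ℕ)) r else 0) +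
        (if a ≤ b + (d : ℕ) ∧ (d : ℕ) < (c : ℕ) ∧ a < b + (c : ℕ)
          then -(X (b + (c : ℕ) - a) (b + (d : ℕ) - a) * v (b + (d : ℕ)) r) else 0) := by
      intro d
      simp only [hT, Matrix.of_apply]
      by_cases h1 : d = c
      · subst h1
        simp [show ¬ ((d : ℕ) < (d : ℕ)) by omega]
      · simp only [h1, if_false]
        split_ifs <;> ring
    rw [Finset.sum_congr rfl (fun d _ => hsum d), Finset.sum_add_distrib]
    rw [Finset.sum_ite_eq' Finset.univ c (fun _ => v (b + (c : ℕ)) r)]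
    simp only [Finset.mem_univ, if_true, Matrix.of_apply]
    by_cases hc : a < b + (c : ℕ)
    · -- column is u (b + c - a)
      set m := b + (c : ℕ) - a with hm
      have hm1 : 1 ≤ m := by omega
      have hm2 : m ≤ k - 2 := by
        have := c.isLt
        omega
      have hcol : v2 (b + (c : ℕ)) = u m := by
        rw [hv2 (b + (c : ℕ)) (by omega) (by have := c.isLt; omega)]
        have := c.isLt
        rw [if_neg (by omega), if_pos (by omega)]
      have hsum2 : (∑ d : Fin k, if a ≤ b + (d : ℕ) ∧ (d : ℕ) < (c : ℕ) ∧ a < b + (c : ℕ)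
            then -(X m (b + (d : ℕ) - a) * v (b + (d : ℕ)) r) else 0) =
          - ∑ s ∈ Finset.range m, X m s * v (a + s) r := by
        rw [Fin.sum_univ_eq_sum_range (fun t => if a ≤ b + t ∧ t < (c : ℕ) ∧ a < b + (c : ℕ)
            then -(X m (b + t - a) * v (b + t) r) else 0) k]
        rw [← Finset.sum_neg_distrib,
          ← sum_shift k (a - b) m (by have := c.isLt; omega) (fun s => -(X m s * v (a + s) r))]
        apply Finset.sum_congr rfl
        intro t _
        by_cases ht : a ≤ b + t ∧ t < (c : ℕ)
        · rw [if_pos ⟨ht.1, ht.2, hc⟩, if_pos (by omega)]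
          have e1 : b + t - a = t - (a - b) := by omega
          have e2 : b + t = a + (t - (a - b)) := by omega
          rw [e1, e2]
        · rw [if_neg (by tauto), if_neg (by omega)]
      rw [hsum2, hcol, hu_apply' k n a v u hu m hm1 hm2 r]
      have : b + (c : ℕ) = a + m := by omega
      rw [this]
      ring
    · have hcol : v2 (b + (c : ℕ)) = v (b + (c : ℕ)) := by
        rw [hv2 (b + (c : ℕ)) (by omega) (by have := c.isLt; omega), if_pos (by omega)]
      have hz : (∑ d : Fin k, if a ≤ b + (d : ℕ) ∧ (d : ℕ) < (c : ℕ) ∧ a < b + (c : ℕ)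
            then -(X (b + (c : ℕ) - a) (b + (d : ℕ) - a) * v (b + (d : ℕ)) r) else 0) = 0 := by
        apply Finset.sum_eq_zero
        intro d _
        rw [if_neg (by tauto)]
      rw [hz, hcol, add_zero]
  show (Matrix.of fun r c : Fin k => v2 (b + (c : ℕ)) r).det = _
  rw [hM, Matrix.det_mul, hdetT, mul_one]
  rfl


lemma det_mid (hk : 2 ≤ k) (hn : k + 2 ≤ n) (h2a : 2 ≤ a)
    (hu : ∀ i, 1 ≤ i → i ≤ k - 2 → u i = v (a + i) -
      ∑ s ∈ Finset.range i,
        (Delta k v (Iprime k n a i s) / Delta k v (Iset k n a i)) • v (a + s))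
    (hv2 : ∀ m, 1 ≤ m → m ≤ a + k - 1 →
      v2 m = if m ≤ a then v m else if m ≤ a + k - 2 then u (m - a) else v n) :
    Delta k v2 (fun j => a + (j : ℕ)) = Delta k v (Iset k n a (k - 1)) := by
  classical
  set X : ℕ → ℕ → ℂ := fun m s => Delta k v (Iprime k n a m s) / Delta k v (Iset k n a m)
    with hX
  set T : Matrix (Fin k) (Fin k) ℂ := Matrix.of (fun d c : Fin k =>
    (if d = c then (1 : ℂ) else 0) +
    (if (d : ℕ) < (c : ℕ) ∧ (c : ℕ) ≤ k - 2 then - X (c : ℕ) (d : ℕ) else 0)) with hT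
  have hTtri : T.BlockTriangular id := by
    intro d c h
    have h' : (c : ℕ) < (d : ℕ) := h
    have h1 : ¬ d = c := by intro hh; subst hh; exact absurd h (lt_irrefl _)
    rw [hT]
    simp only [Matrix.of_apply]
    rw [if_neg h1, if_neg (by omega), zero_add]
  have hdetT : T.det = 1 := by
    rw [Matrix.det_of_upperTriangular hTtri]
    apply Finset.prod_eq_one
    intro c _
    rw [hT]
    simp only [Matrix.of_apply]
    rw [if_neg (show ¬ ((c : ℕ) < (c : ℕ) ∧ (c : ℕ) ≤ k - 2) by omega), add_zero]
    simp
  have hM : (Matrix.of fun r c : Fin k => v2 (a + (c : ℕ)) r) =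
      (Matrix.of fun r d : Fin k => v (Iset k n a (k - 1) d) r) * T := by
    ext r c
    rw [Matrix.mul_apply]
    have hsum : ∀ d : Fin k,
        (Matrix.of fun r d : Fin k => v (Iset k n a (k - 1) d) r) r d * T d c =
        (if d = c then v (Iset k n a (k - 1) c) r else 0) +
        (if (d : ℕ) < (c : ℕ) ∧ (c : ℕ) ≤ k - 2
          then -(X (c : ℕ) (d : ℕ) * v (Iset k n a (k - 1) d) r) else 0) := by
      intro d
      simp only [hT, Matrix.of_apply]
      by_cases h1 : d = c
      · subst h1
        simp [show ¬ ((d : ℕ) < (d : ℕ)) by omega]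
      · simp only [h1, if_false]
        split_ifs <;> ring
    rw [Finset.sum_congr rfl (fun d _ => hsum d), Finset.sum_add_distrib]
    rw [Finset.sum_ite_eq' Finset.univ c (fun _ => v (Iset k n a (k - 1) c) r)]
    simp only [Finset.mem_univ, if_true, Matrix.of_apply]
    have hck := c.isLt
    by_cases hc : 1 ≤ (c : ℕ) ∧ (c : ℕ) ≤ k - 2
    · -- column is u c
      have hcol : v2 (a + (c : ℕ)) = u (c : ℕ) := by
        rw [hv2 (a + (c : ℕ)) (by omega) (by omega), if_neg (by omega),
          if_pos (show a + (c : ℕ) ≤ a + k - 2 by omega)]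
        have he : a + (c : ℕ) - a = (c : ℕ) := by omega
        rw [he]
      have hsum2 : (∑ d : Fin k, if (d : ℕ) < (c : ℕ) ∧ (c : ℕ) ≤ k - 2
            then -(X (c : ℕ) (d : ℕ) * v (Iset k n a (k - 1) d) r) else 0) =
          - ∑ s ∈ Finset.range (c : ℕ), X (c : ℕ) s * v (a + s) r := by
        have hrw : ∀ d : Fin k, (if (d : ℕ) < (c : ℕ) ∧ (c : ℕ) ≤ k - 2
            then -(X (c : ℕ) (d : ℕ) * v (Iset k n a (k - 1) d) r) else 0) =
            (if (d : ℕ) < (c : ℕ) ∧ (c : ℕ) ≤ k - 2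
            then -(X (c : ℕ) (d : ℕ) * v (a + (d : ℕ)) r) else 0) := by
          intro d
          by_cases hd : (d : ℕ) < (c : ℕ) ∧ (c : ℕ) ≤ k - 2
          · rw [if_pos hd, if_pos hd]
            have he : Iset k n a (k - 1) d = a + (d : ℕ) := by
              unfold Iset; rw [if_pos (by omega)]
            rw [he]
          · rw [if_neg hd, if_neg hd]
        rw [Finset.sum_congr rfl (fun d _ => hrw d)]
        rw [Fin.sum_univ_eq_sum_range (fun t => if t < (c : ℕ) ∧ (c : ℕ) ≤ k - 2
            then -(X (c : ℕ) t * v (a + t) r) else 0) k]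
        rw [← Finset.sum_neg_distrib,
          ← sum_shift k 0 (c : ℕ) (by omega) (fun s => -(X (c : ℕ) s * v (a + s) r))]
        apply Finset.sum_congr rfl
        intro t _
        by_cases ht : t < (c : ℕ)
        · rw [if_pos ⟨ht, hc.2⟩, if_pos (show 0 ≤ t ∧ t < 0 + (c : ℕ) by omega), Nat.sub_zero]
        · rw [if_neg (by tauto), if_neg (by omega)]
      rw [hsum2, hcol, hu_apply' k n a v u hu (c : ℕ) hc.1 hc.2 r]
      have he : Iset k n a (k - 1) c = a + (c : ℕ) := by
        unfold Iset; rw [if_pos (by omega)]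
      rw [he]
      ring
    · have hz : (∑ d : Fin k, if (d : ℕ) < (c : ℕ) ∧ (c : ℕ) ≤ k - 2
            then -(X (c : ℕ) (d : ℕ) * v (Iset k n a (k - 1) d) r) else 0) = 0 :=
        Finset.sum_eq_zero fun d _ => if_neg (by omega)
      rw [hz, add_zero]
      rcases (by omega : (c : ℕ) = 0 ∨ (c : ℕ) = k - 1) with h0 | h0
      · rw [hv2 _ (by omega) (by omega), if_pos (by omega)]
        have he : Iset k n a (k - 1) c = a + (c : ℕ) := by
          unfold Iset; rw [if_pos (by omega)]
        rw [he]
      · rw [hv2 _ (by omega) (by omega), if_neg (by omega), if_neg (by omega)]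
        have he : Iset k n a (k - 1) c = n := by
          unfold Iset; rw [if_neg (by omega)]; omega
        rw [he]
  show (Matrix.of fun r c : Fin k => v2 (a + (c : ℕ)) r).det = _
  rw [hM, Matrix.det_mul, hdetT, mul_one]
  rfl


lemma det_wrap (hk : 2 ≤ k) (hn : k + 2 ≤ n) (h2a : 2 ≤ a) (han : a ≤ n - k)
    (hΔ : ∀ i, 1 ≤ i → i ≤ k - 1 → Delta k v (Iset k n a i) ≠ 0)
    (hu : ∀ i, 1 ≤ i → i ≤ k - 2 → u i = v (a + i) -
      ∑ s ∈ Finset.range i,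
        (Delta k v (Iprime k n a i s) / Delta k v (Iset k n a i)) • v (a + s))
    (hv2 : ∀ m, 1 ≤ m → m ≤ a + k - 1 →
      v2 m = if m ≤ a then v m else if m ≤ a + k - 2 then u (m - a) else v n)
    (i : ℕ) (hi1 : 1 ≤ i) (hik : i ≤ k - 1) :
    Delta k v2 (fun j => cyc (a + k - 1) (a + i + (j : ℕ))) =
      Delta k v (Iset k n a (k - 1)) / Delta k v (Iset k n a i) *
        Delta k v (fun j => if (j : ℕ) < k - i then n - k + i + 1 + (j : ℕ)
          else (j : ℕ) - (k - i) + 1) := by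
  classical
  set X : ℕ → ℕ → ℂ := fun m s => Delta k v (Iprime k n a m s) / Delta k v (Iset k n a m)
    with hX
  -- Step 0 : compute the cyclic index function
  have hcol : ∀ j : Fin k, cyc (a + k - 1) (a + i + (j : ℕ)) =
      (if (j : ℕ) < k - i then a + i + (j : ℕ) else (j : ℕ) - (k - i) + 1) := by
    intro j
    have hjk := j.isLt
    by_cases hj : (j : ℕ) < k - i
    · rw [cyc_eq_self (by omega) (by omega), if_pos hj]
    · rw [cyc_eq_sub (by omega) (by omega), if_neg hj]
      omega
  have h0 : Delta k v2 (fun j => cyc (a + k - 1) (a + i + (j : ℕ))) =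
      Delta k v2 (fun j => if (j : ℕ) < k - i then a + i + (j : ℕ)
        else (j : ℕ) - (k - i) + 1) := Delta_congr v2 hcol
  -- Step 1 : replace wrapped u-columns by v-columns
  set M1 : Matrix (Fin k) (Fin k) ℂ := Matrix.of (fun r c : Fin k =>
    if (c : ℕ) < k - i then v2 (a + i + (c : ℕ)) r
    else v ((c : ℕ) - (k - i) + 1) r) with hM1
  set Tup : Matrix (Fin k) (Fin k) ℂ := Matrix.of (fun d c : Fin k =>
    (if d = c then (1 : ℂ) else 0) +
    (if a < (c : ℕ) - (k - i) + 1 ∧ a + k - i - 1 ≤ (d : ℕ) ∧ (d : ℕ) < (c : ℕ)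
      then - X ((c : ℕ) - (k - i) + 1 - a) ((d : ℕ) - (a + k - i - 1)) else 0)) with hTup
  have hTuptri : Tup.BlockTriangular id := by
    intro d c h
    have h' : (c : ℕ) < (d : ℕ) := h
    have h1 : ¬ d = c := by intro hh; subst hh; exact absurd h (lt_irrefl _)
    rw [hTup]
    simp only [Matrix.of_apply]
    rw [if_neg h1, if_neg (by omega), zero_add]
  have hdetTup : Tup.det = 1 := by
    rw [Matrix.det_of_upperTriangular hTuptri]
    apply Finset.prod_eq_one
    intro c _
    rw [hTup]
    simp only [Matrix.of_apply]
    rw [if_neg (show ¬ (a < (c : ℕ) - (k - i) + 1 ∧ a + k - i - 1 ≤ (c : ℕ) ∧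
      (c : ℕ) < (c : ℕ)) by omega), add_zero]
    simp
  have hMw : (Matrix.of fun r c : Fin k => v2 (if (c : ℕ) < k - i then a + i + (c : ℕ)
      else (c : ℕ) - (k - i) + 1) r) = M1 * Tup := by
    ext r c
    rw [Matrix.mul_apply]
    have hck := c.isLt
    have hsum : ∀ d : Fin k, M1 r d * Tup d c =
        (if d = c then M1 r c else 0) +
        (if a < (c : ℕ) - (k - i) + 1 ∧ a + k - i - 1 ≤ (d : ℕ) ∧ (d : ℕ) < (c : ℕ)
          then -(X ((c : ℕ) - (k - i) + 1 - a) ((d : ℕ) - (a + k - i - 1)) * M1 r d)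
          else 0) := by
      intro d
      rw [hTup]
      simp only [Matrix.of_apply]
      by_cases h1 : d = c
      · subst h1
        rw [if_pos rfl, if_pos rfl, if_neg (by omega), if_neg (by omega)]
        ring
      · rw [if_neg h1, if_neg h1]
        split_ifs <;> ring
    rw [Finset.sum_congr rfl (fun d _ => hsum d), Finset.sum_add_distrib]
    rw [Finset.sum_ite_eq' Finset.univ c (fun _ => M1 r c)]
    simp only [Finset.mem_univ, if_true]
    by_cases hP : a < (c : ℕ) - (k - i) + 1
    · -- wrapped column with index m > a : a u-column
      set m : ℕ := (c : ℕ) - (k - i) + 1 with hm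
      have hcki : k - i ≤ (c : ℕ) := by omega
      have hmi : m ≤ i := by omega
      have hma : 1 ≤ m - a ∧ m - a ≤ k - 2 := by omega
      have hv2m : v2 m = u (m - a) := by
        rw [hv2 m (by omega) (by omega), if_neg (by omega), if_pos (by omega)]
      have hM1c : M1 r c = v m r := by
        rw [hM1]
        simp only [Matrix.of_apply]
        rw [if_neg (by omega)]
      have hsum2 : (∑ d : Fin k,
          if a < (c : ℕ) - (k - i) + 1 ∧ a + k - i - 1 ≤ (d : ℕ) ∧ (d : ℕ) < (c : ℕ)
          then -(X ((c : ℕ) - (k - i) + 1 - a) ((d : ℕ) - (a + k - i - 1)) * M1 r d)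
          else 0) = - ∑ s ∈ Finset.range (m - a), X (m - a) s * v (a + s) r := by
        have hrw : ∀ d : Fin k,
            (if a < (c : ℕ) - (k - i) + 1 ∧ a + k - i - 1 ≤ (d : ℕ) ∧ (d : ℕ) < (c : ℕ)
            then -(X ((c : ℕ) - (k - i) + 1 - a) ((d : ℕ) - (a + k - i - 1)) * M1 r d)
            else 0) =
            (if a + k - i - 1 ≤ (d : ℕ) ∧ (d : ℕ) < (c : ℕ)
            then -(X (m - a) ((d : ℕ) - (a + k - i - 1)) *
              v ((d : ℕ) - (k - i) + 1) r) else 0) := by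
          intro d
          by_cases hd : a + k - i - 1 ≤ (d : ℕ) ∧ (d : ℕ) < (c : ℕ)
          · rw [if_pos ⟨hP, hd.1, hd.2⟩, if_pos hd]
            have he : M1 r d = v ((d : ℕ) - (k - i) + 1) r := by
              rw [hM1]; simp only [Matrix.of_apply]; rw [if_neg (by omega)]
            rw [he]
          · rw [if_neg (by tauto), if_neg hd]
        rw [Finset.sum_congr rfl (fun d _ => hrw d)]
        rw [Fin.sum_univ_eq_sum_range (fun t =>
          if a + k - i - 1 ≤ t ∧ t < (c : ℕ)
          then -(X (m - a) (t - (a + k - i - 1)) * v (t - (k - i) + 1) r) else 0) k]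
        rw [← Finset.sum_neg_distrib,
          ← sum_shift k (a + k - i - 1) (m - a) (by omega)
            (fun s => -(X (m - a) s * v (a + s) r))]
        apply Finset.sum_congr rfl
        intro t _
        by_cases ht : a + k - i - 1 ≤ t ∧ t < (c : ℕ)
        · rw [if_pos ht, if_pos (by omega)]
          have e1 : t - (k - i) + 1 = a + (t - (a + k - i - 1)) := by omega
          rw [e1]
        · rw [if_neg ht, if_neg (by omega)]
      rw [hsum2, hM1c]
      have hMwc : v2 ((c : ℕ) - (k - i) + 1) r = u (m - a) r := by rw [← hm, hv2m]
      simp only [Matrix.of_apply]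
      rw [if_neg (Nat.not_lt.mpr hcki), hMwc, hu_apply' k n a v u hu (m - a) hma.1 hma.2 r]
      have e2 : a + (m - a) = m := by omega
      rw [e2]
      ring
    · -- v-column or plain column : second sum vanishes
      have hz : (∑ d : Fin k,
          if a < (c : ℕ) - (k - i) + 1 ∧ a + k - i - 1 ≤ (d : ℕ) ∧ (d : ℕ) < (c : ℕ)
          then -(X ((c : ℕ) - (k - i) + 1 - a) ((d : ℕ) - (a + k - i - 1)) * M1 r d)
          else 0) = 0 := Finset.sum_eq_zero fun d _ => if_neg (by tauto)
      rw [hz, add_zero, hM1]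
      simp only [Matrix.of_apply]
      by_cases hc : (c : ℕ) < k - i
      · rw [if_pos hc, if_pos hc]
      · rw [if_neg hc, if_neg hc]
        rw [hv2 ((c : ℕ) - (k - i) + 1) (by omega) (by omega), if_pos (by omega)]
  -- Step 2 : factor M1 = B * Tlow
  set B : Matrix (Fin k) (Fin k) ℂ := Matrix.of (fun r d : Fin k =>
    v (if (d : ℕ) < k - i then n - k + i + 1 + (d : ℕ) else (d : ℕ) - (k - i) + 1) r) with hB
  set Tlow : Matrix (Fin k) (Fin k) ℂ := Matrix.of (fun d c : Fin k =>
    if (c : ℕ) < k - i - 1 then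
      (if (c : ℕ) ≤ (d : ℕ) ∧ (d : ℕ) < k - i
        then Delta k v (Iprime k n a (i + (c : ℕ)) (i + (d : ℕ))) /
          Delta k v (Iset k n a (i + (c : ℕ))) else 0)
    else (if d = c then (1 : ℂ) else 0)) with hTlow
  have hM1B : M1 = B * Tlow := by
    ext r c
    rw [Matrix.mul_apply]
    have hck := c.isLt
    by_cases hc : (c : ℕ) < k - i - 1
    · -- a u-column of M1
      have hM1c : M1 r c = u (i + (c : ℕ)) r := by
        rw [hM1]
        simp only [Matrix.of_apply]
        rw [if_pos (by omega)]
        rw [hv2 (a + i + (c : ℕ)) (by omega) (by omega), if_neg (by omega),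
          if_pos (by omega)]
        have e : a + i + (c : ℕ) - a = i + (c : ℕ) := by omega
        rw [e]
      have hterm : ∀ d : Fin k, B r d * Tlow d c =
          (if (c : ℕ) ≤ (d : ℕ) ∧ (d : ℕ) < k - i then
            Delta k v (Iprime k n a (i + (c : ℕ)) (i + (d : ℕ))) /
              Delta k v (Iset k n a (i + (c : ℕ))) *
              v (n - k + i + 1 + (d : ℕ)) r else 0) := by
        intro d
        rw [hTlow, hB]
        simp only [Matrix.of_apply]
        rw [if_pos hc]
        by_cases hd : (c : ℕ) ≤ (d : ℕ) ∧ (d : ℕ) < k - i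
        · rw [if_pos hd, if_pos hd, if_pos hd.2]
          ring
        · rw [if_neg hd, if_neg hd, mul_zero]
      rw [Finset.sum_congr rfl (fun d _ => hterm d), hM1c,
        u_expand k n a v u hu (i + (c : ℕ)) (by omega) (by omega)
          (hΔ (i + (c : ℕ)) (by omega) (by omega)) r]
      rw [Fin.sum_univ_eq_sum_range (fun t => if i + (c : ℕ) ≤ t then
        Delta k v (Iprime k n a (i + (c : ℕ)) t) / Delta k v (Iset k n a (i + (c : ℕ))) *
          v (n - k + 1 + t) r else 0) k]
      rw [Fin.sum_univ_eq_sum_range (fun t => if (c : ℕ) ≤ t ∧ t < k - i then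
        Delta k v (Iprime k n a (i + (c : ℕ)) (i + t)) /
          Delta k v (Iset k n a (i + (c : ℕ))) * v (n - k + i + 1 + t) r else 0) k]
      have h1 : (∑ t ∈ Finset.range k, if i + (c : ℕ) ≤ t then
          Delta k v (Iprime k n a (i + (c : ℕ)) t) / Delta k v (Iset k n a (i + (c : ℕ))) *
            v (n - k + 1 + t) r else 0) =
          ∑ s ∈ Finset.range (k - i - (c : ℕ)),
            Delta k v (Iprime k n a (i + (c : ℕ)) (i + (c : ℕ) + s)) /
              Delta k v (Iset k n a (i + (c : ℕ))) * v (n - k + i + 1 + ((c : ℕ) + s)) r := by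
        rw [← sum_shift k (i + (c : ℕ)) (k - i - (c : ℕ)) (by omega)
          (fun s => Delta k v (Iprime k n a (i + (c : ℕ)) (i + (c : ℕ) + s)) /
            Delta k v (Iset k n a (i + (c : ℕ))) * v (n - k + i + 1 + ((c : ℕ) + s)) r)]
        apply Finset.sum_congr rfl
        intro t ht
        simp only [Finset.mem_range] at ht
        by_cases h2 : i + (c : ℕ) ≤ t
        · rw [if_pos h2, if_pos (by omega)]
          have e1 : i + (c : ℕ) + (t - (i + (c : ℕ))) = t := by omega
          have e2 : n - k + i + 1 + ((c : ℕ) + (t - (i + (c : ℕ)))) = n - k + 1 + t := by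
            omega
          rw [e1, e2]
        · rw [if_neg h2, if_neg (by omega)]
      have h2 : (∑ t ∈ Finset.range k, if (c : ℕ) ≤ t ∧ t < k - i then
          Delta k v (Iprime k n a (i + (c : ℕ)) (i + t)) /
            Delta k v (Iset k n a (i + (c : ℕ))) * v (n - k + i + 1 + t) r else 0) =
          ∑ s ∈ Finset.range (k - i - (c : ℕ)),
            Delta k v (Iprime k n a (i + (c : ℕ)) (i + (c : ℕ) + s)) /
              Delta k v (Iset k n a (i + (c : ℕ))) * v (n - k + i + 1 + ((c : ℕ) + s)) r := by
        rw [← sum_shift k (c : ℕ) (k - i - (c : ℕ)) (by omega)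
          (fun s => Delta k v (Iprime k n a (i + (c : ℕ)) (i + (c : ℕ) + s)) /
            Delta k v (Iset k n a (i + (c : ℕ))) * v (n - k + i + 1 + ((c : ℕ) + s)) r)]
        apply Finset.sum_congr rfl
        intro t ht
        simp only [Finset.mem_range] at ht
        by_cases h3 : (c : ℕ) ≤ t ∧ t < k - i
        · rw [if_pos h3, if_pos (by omega)]
          have e1 : i + (c : ℕ) + (t - (c : ℕ)) = i + t := by omega
          have e2 : (c : ℕ) + (t - (c : ℕ)) = t := by omega
          rw [e1, e2]
        · rw [if_neg h3, if_neg (by omega)]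
      rw [h1, h2]
    · -- a delta-column
      have hterm : ∀ d : Fin k, B r d * Tlow d c = (if d = c then B r c else 0) := by
        intro d
        rw [hTlow]
        simp only [Matrix.of_apply]
        rw [if_neg hc]
        by_cases hd : d = c
        · subst hd; rw [if_pos rfl, if_pos rfl, mul_one]
        · rw [if_neg hd, if_neg hd, mul_zero]
      rw [Finset.sum_congr rfl (fun d _ => hterm d),
        Finset.sum_ite_eq' Finset.univ c (fun _ => B r c)]
      simp only [Finset.mem_univ, if_true]
      rw [hM1, hB]
      simp only [Matrix.of_apply]
      by_cases hc2 : (c : ℕ) < k - i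
      · -- c = k - i - 1 : the v_n column
        rw [if_pos hc2, if_pos hc2]
        rw [hv2 (a + i + (c : ℕ)) (by omega) (by omega), if_neg (by omega),
          if_neg (by omega)]
        have e : n - k + i + 1 + (c : ℕ) = n := by omega
        rw [e]
      · rw [if_neg hc2, if_neg hc2]
  -- determinant of Tlow
  have hTlowtri : Tlow.BlockTriangular OrderDual.toDual := by
    intro d c h
    have h' : (d : ℕ) < (c : ℕ) := h
    rw [hTlow]
    simp only [Matrix.of_apply]
    by_cases hc : (c : ℕ) < k - i - 1
    · rw [if_pos hc, if_neg (by omega)]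
    · rw [if_neg hc, if_neg (fun hh => by subst hh; exact absurd h' (lt_irrefl _))]
  have hdetTlow : Tlow.det =
      Delta k v (Iset k n a (k - 1)) / Delta k v (Iset k n a i) := by
    rw [Matrix.det_of_lowerTriangular Tlow hTlowtri]
    have hdiag : ∀ c : Fin k, Tlow c c =
        (if (c : ℕ) < k - i - 1 then
          Delta k v (Iprime k n a (i + (c : ℕ)) (i + (c : ℕ))) /
            Delta k v (Iset k n a (i + (c : ℕ))) else 1) := by
      intro c
      rw [hTlow]
      simp only [Matrix.of_apply]
      by_cases hc : (c : ℕ) < k - i - 1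
      · rw [if_pos hc, if_pos hc, if_pos ⟨le_rfl, by omega⟩]
      · rw [if_neg hc, if_neg hc]
        simp
    rw [Finset.prod_congr rfl (fun c _ => hdiag c)]
    rw [Fin.prod_univ_eq_prod_range (fun t => if t < k - i - 1 then
      Delta k v (Iprime k n a (i + t) (i + t)) / Delta k v (Iset k n a (i + t)) else 1) k]
    rw [← Finset.prod_subset (Finset.range_subset_range.mpr (show k - i - 1 ≤ k by omega))
      (fun x _ hx => by
        rw [if_neg (fun hh => hx (Finset.mem_range.mpr hh))])]
    have hc2 : ∀ t ∈ Finset.range (k - i - 1),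
        (if t < k - i - 1 then
          Delta k v (Iprime k n a (i + t) (i + t)) / Delta k v (Iset k n a (i + t)) else 1) =
        Delta k v (Iset k n a (i + t + 1)) / Delta k v (Iset k n a (i + t)) := by
      intro t ht
      simp only [Finset.mem_range] at ht
      rw [if_pos ht, Iprime_self k n a (i + t)]
    rw [Finset.prod_congr rfl hc2]
    have e3 : k - i - 1 = k - 1 - i := by omega
    rw [e3, prod_telescope (fun m => Delta k v (Iset k n a m)) i (k - 1 - i)
      (fun m h1 h2 => hΔ m (by omega) (by omega))]
    have e4 : i + (k - 1 - i) = k - 1 := by omega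
    rw [e4]
  -- assemble
  rw [h0]
  show (Matrix.of fun c j : Fin k => v2 (if (j : ℕ) < k - i then a + i + (j : ℕ)
      else (j : ℕ) - (k - i) + 1) c).det = _
  rw [hMw, Matrix.det_mul, hdetTup, mul_one, hM1B, Matrix.det_mul, hdetTlow]
  rw [mul_comm]
  rfl


end Main

/-- `V₂ = (v₁, …, v_a, u₁, …, u_{k-2}, v_n)` lies in `Π°_{k,a+k-1}`, with the stated
identities for its cyclically consecutive minors. -/
theorem V2_in_positroid (k n a : ℕ)
    (hk : 2 ≤ k) (hn : k + 2 ≤ n) (h2a : 2 ≤ a) (han : a ≤ n - k)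
    (v : ℕ → Fin k → ℂ) (hV : PiCirc k n v)
    (hΔ : ∀ i, 1 ≤ i → i ≤ k - 1 → Delta k v (Iset k n a i) ≠ 0)
    (u : ℕ → Fin k → ℂ)
    (hu : ∀ i, 1 ≤ i → i ≤ k - 2 → u i = v (a + i) -
      ∑ s ∈ Finset.range i,
        (Delta k v (Iprime k n a i s) / Delta k v (Iset k n a i)) • v (a + s))
    (v2 : ℕ → Fin k → ℂ)
    (hv2 : ∀ m, 1 ≤ m → m ≤ a + k - 1 →
      v2 m = if m ≤ a then v m else if m ≤ a + k - 2 then u (m - a) else v n) :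
    PiCirc k (a + k - 1) v2 ∧
    (∀ b, 1 ≤ b → b + k - 1 ≤ a →
      Delta k v2 (fun j => b + (j : ℕ)) = Delta k v (fun j => b + (j : ℕ))) ∧
    (∀ b, 1 ≤ b → b < a → a < b + k - 1 →
      Delta k v2 (fun j => b + (j : ℕ)) = Delta k v (fun j => b + (j : ℕ))) ∧
    (Delta k v2 (fun j => a + (j : ℕ)) = Delta k v (Iset k n a (k - 1))) ∧
    (∀ i, 1 ≤ i → i ≤ k - 2 →
      Delta k v2 (fun j => cyc (a + k - 1) (a + i + (j : ℕ))) =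
        Delta k v (Iset k n a (k - 1)) / Delta k v (Iset k n a i) *
          Delta k v (fun j => if (j : ℕ) < k - i then n - k + i + 1 + (j : ℕ)
            else (j : ℕ) - (k - i) + 1)) := by
  have hN : a + k - 1 ≥ k + 1 := by omega
  have claim1 : ∀ b, 1 ≤ b → b < a →
      Delta k v2 (fun j => b + (j : ℕ)) = Delta k v (fun j => b + (j : ℕ)) :=
    fun b hb1 hba => det_low k n a v u v2 hk h2a hu hv2 b hb1 hba
  have claim3 : Delta k v2 (fun j => a + (j : ℕ)) = Delta k v (Iset k n a (k - 1)) :=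
    det_mid k n a v u v2 hk hn h2a hu hv2
  have claim4 : ∀ i, 1 ≤ i → i ≤ k - 1 →
      Delta k v2 (fun j => cyc (a + k - 1) (a + i + (j : ℕ))) =
        Delta k v (Iset k n a (k - 1)) / Delta k v (Iset k n a i) *
          Delta k v (fun j => if (j : ℕ) < k - i then n - k + i + 1 + (j : ℕ)
            else (j : ℕ) - (k - i) + 1) :=
    fun i hi1 hik => det_wrap k n a v u v2 hk hn h2a han hΔ hu hv2 i hi1 hik
  have hwrapne : ∀ i, 1 ≤ i → i ≤ k - 1 →
      Delta k v (fun j => if (j : ℕ) < k - i then n - k + i + 1 + (j : ℕ)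
        else (j : ℕ) - (k - i) + 1) ≠ 0 := by
    intro i hi1 hik
    have e : Delta k v (fun j => if (j : ℕ) < k - i then n - k + i + 1 + (j : ℕ)
        else (j : ℕ) - (k - i) + 1) =
        Delta k v (fun j => cyc n (n - k + i + 1 + (j : ℕ))) := by
      apply Delta_congr
      intro j
      have hj := j.isLt
      by_cases hjc : (j : ℕ) < k - i
      · rw [if_pos hjc, cyc_eq_self (by omega) (by omega)]
      · rw [if_neg hjc, cyc_eq_sub (by omega) (by omega)]
        omega
    rw [e]
    exact hV (n - k + i + 1) (by omega) (by omega)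
  refine ⟨?_, ?_, ?_, claim3, fun i hi1 hik => claim4 i hi1 (by omega)⟩
  · -- PiCirc
    intro b hb1 hb2
    by_cases hba : b ≤ a
    · have hcycb : ∀ j : Fin k, cyc (a + k - 1) (b + (j : ℕ)) = b + (j : ℕ) := by
        intro j
        have hj := j.isLt
        exact cyc_eq_self (by omega) (by omega)
      rw [Delta_congr v2 hcycb]
      by_cases hbeq : b = a
      · subst hbeq
        rw [claim3]
        exact hΔ (k - 1) (by omega) le_rfl
      · rw [claim1 b hb1 (by omega)]
        have e : Delta k v (fun j => b + (j : ℕ)) =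
            Delta k v (fun j => cyc n (b + (j : ℕ))) := by
          apply Delta_congr
          intro j
          have hj := j.isLt
          rw [cyc_eq_self (by omega) (by omega)]
        rw [e]
        exact hV b (by omega) (by omega)
    · have hi1 : 1 ≤ b - a := by omega
      have hik : b - a ≤ k - 1 := by omega
      have e : Delta k v2 (fun j => cyc (a + k - 1) (b + (j : ℕ))) =
          Delta k v2 (fun j => cyc (a + k - 1) (a + (b - a) + (j : ℕ))) := by
        apply Delta_congr
        intro j
        congr 1
        omega
      rw [e, claim4 (b - a) hi1 hik]
      exact mul_ne_zero
        (div_ne_zero (hΔ (k - 1) (by omega) le_rfl) (hΔ (b - a) hi1 hik))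
        (hwrapne (b - a) hi1 hik)
  · intro b hb1 hba
    exact claim1 b hb1 (by omega)
  · intro b hb1 hba _
    exact claim1 b hb1 hba
end
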